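/- arXiv:2106.09988 — 6 statements merged into one kernel-verified Lean document; each statement's English description precedes it below -/
import Mathlib

section
/- Let K be an algebraically closed field of characteristic 2 and let B⁰ = x₁³x₂ + x₂³x₃ + x₃³x₁ be the Klein quartic. Then the common zero locus in ℙ²(K) of the three partial derivatives B⁰₁ = x₁²x₂ + x₃³, B⁰₂ = x₂²x₃ + x₁³, B⁰₃ = x₃²x₁ + x₂³ consists of exactly the 7 points [1 : ε : ε⁵] where ε ranges over the 7th roots of unity in K. -/
/-!
In characteristic 2 the coefficient 3 becomes 1, so the partials vanish exactly when
`x₀²x₁ = x₂³`, `x₀³ = x₁²x₂` and `x₁³ = x₂²x₀`. At a nonzero solution `x₀ ≠ 0` (otherwise the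
first and third equations kill `x₂` and then `x₁`), and eliminating `x₂` from the first two
equations gives `x₁⁷ = x₀⁷`; so `ε = x₁/x₀` is a 7th root of unity and `x₂ = x₀ε⁵`. The points
`[1 : ε : ε⁵]` are pairwise distinct, and since `7 ≠ 0` in `K` there are exactly seven `ε`.
-/

open MvPolynomial

noncomputable def kleinQuartic (R : Type*) [CommSemiring R] : MvPolynomial (Fin 3) R :=
  X 0 ^ 3 * X 1 + X 1 ^ 3 * X 2 + X 2 ^ 3 * X 0

theorem forall_eval_pderiv_kleinQuartic_eq_zero_iff {R : Type*} [CommRing R] [CharP R 2]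
    (v : Fin 3 → R) :
    (∀ i, eval v (pderiv i (kleinQuartic R)) = 0) ↔
      v 0 ^ 2 * v 1 = v 2 ^ 3 ∧ v 0 ^ 3 = v 1 ^ 2 * v 2 ∧ v 1 ^ 3 = v 2 ^ 2 * v 0 := by
  have h3 : (3 : R) = 1 := by linear_combination (CharTwo.two_eq_zero : (2 : R) = 0)
  simp [Fin.forall_fin_succ, kleinQuartic, pderiv_X, Pi.single_apply, h3, CharTwo.add_eq_zero,
    mul_comm]

theorem klein_system_eq_zero_of_left_eq_zero {M : Type*} [CommMonoidWithZero M]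
    [NoZeroDivisors M] {x y z : M} (h₁ : x ^ 2 * y = z ^ 3) (h₃ : y ^ 3 = z ^ 2 * x)
    (hx : x = 0) : y = 0 ∧ z = 0 := by
  subst hx
  have hz : z = 0 := pow_eq_zero_iff three_ne_zero |>.mp (by simpa using h₁.symm)
  subst hz
  exact ⟨pow_eq_zero_iff three_ne_zero |>.mp (by simpa using h₃), rfl⟩

section Field

variable {K : Type*} [Field K] {x y z : K}

theorem klein_system_eq_of_left_ne_zero (h₁ : x ^ 2 * y = z ^ 3) (h₂ : x ^ 3 = y ^ 2 * z)
    (hx : x ≠ 0) : (y / x) ^ 7 = 1 ∧ z = x * (y / x) ^ 5 := by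
  have hy : y ≠ 0 := by
    rintro rfl
    exact hx (pow_eq_zero_iff three_ne_zero |>.mp (by simpa using h₂))
  have h₇ : y ^ 7 = x ^ 7 := by
    refine mul_right_cancel₀ (pow_ne_zero 2 hx) ?_
    linear_combination y ^ 6 * h₁ - (y ^ 4 * z ^ 2 + x ^ 3 * y ^ 2 * z + x ^ 6) * h₂
  refine ⟨by rw [div_pow, h₇, div_self (pow_ne_zero 7 hx)], ?_⟩
  field_simp
  refine mul_right_cancel₀ (pow_ne_zero 2 hy) ?_
  linear_combination -(x ^ 4 * h₂) - h₇

theorem forall_eval_pderiv_kleinQuartic_eq_zero_iff_exists_smul [CharP K 2] {v : Fin 3 → K}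
    (hv : v ≠ 0) :
    (∀ i, eval v (pderiv i (kleinQuartic K)) = 0) ↔
      ∃ ε c : K, c ≠ 0 ∧ ε ^ 7 = 1 ∧ v = c • ![1, ε, ε ^ 5] := by
  rw [forall_eval_pderiv_kleinQuartic_eq_zero_iff]
  constructor
  · rintro ⟨h₁, h₂, h₃⟩
    have hx : v 0 ≠ 0 := fun hx => hv <| by
      obtain ⟨hy, hz⟩ := klein_system_eq_zero_of_left_eq_zero h₁ h₃ hx
      ext i; fin_cases i <;> simp [hx, hy, hz]
    obtain ⟨hε, hz⟩ := klein_system_eq_of_left_ne_zero h₁ h₂ hx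
    refine ⟨v 1 / v 0, v 0, hx, hε, ?_⟩
    ext i; fin_cases i <;> simp [hz, mul_div_cancel₀ _ hx]
  · rintro ⟨ε, c, -, hε, rfl⟩
    simp only [Pi.smul_apply, Matrix.cons_val_zero, Matrix.cons_val_one, Matrix.cons_val_two,
      Matrix.head_cons, Matrix.tail_cons, smul_eq_mul, mul_one]
    refine ⟨?_, ?_, ?_⟩
    · linear_combination -(c ^ 3 * ε * (ε ^ 7 + 1)) * hε
    · linear_combination -(c ^ 3 * hε)
    · linear_combination -(c ^ 3 * ε ^ 3 * hε)

theorem ncard_setOf_pow_eq_one [IsAlgClosed K] {n : ℕ} (hn : (n : K) ≠ 0) :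
    {ε : K | ε ^ n = 1}.ncard = n := by
  have : NeZero (n : K) := ⟨hn⟩
  obtain ⟨ζ, hζ⟩ := HasEnoughRootsOfUnity.exists_primitiveRoot K n
  have hpos : 0 < n := Nat.pos_of_ne_zero (by rintro rfl; simp at hn)
  calc {ε : K | ε ^ n = 1}.ncard = (Polynomial.nthRootsFinset n (1 : K)).card := by
        rw [← Set.ncard_coe_finset]
        congr 1
        ext ε
        simp [Polynomial.mem_nthRootsFinset hpos]
    _ = n := hζ.card_nthRootsFinset

end Field

open Projectivization
open scoped LinearAlgebra.Projectivization

section Projective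

variable (K : Type*) [Field K]

noncomputable def kleinPoint (ε : K) : ℙ K (Fin 3 → K) :=
  mk K ![1, ε, ε ^ 5] fun h => by simpa using congrFun h 0

variable {K}

theorem kleinPoint_injective : Function.Injective (kleinPoint K) := by
  intro ε η h
  obtain ⟨a, ha⟩ := (mk_eq_mk_iff' K _ _ _ _).mp h
  have h₀ := congrFun ha 0
  have h₁ := congrFun ha 1
  simp only [Pi.smul_apply, Matrix.cons_val_zero, Matrix.cons_val_one, smul_eq_mul,
    mul_one] at h₀ h₁
  rw [← h₁, h₀, one_mul]

theorem eq_kleinPoint_iff {p : ℙ K (Fin 3 → K)} {ε : K} :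
    p = kleinPoint K ε ↔ ∃ c : K, c ≠ 0 ∧ p.rep = c • ![1, ε, ε ^ 5] := by
  conv_lhs => rw [← p.mk_rep]
  rw [kleinPoint, mk_eq_mk_iff']
  constructor
  · rintro ⟨c, hc⟩
    exact ⟨c, by rintro rfl; exact p.rep_nonzero (by simp [← hc]), hc.symm⟩
  · rintro ⟨c, -, hc⟩
    exact ⟨c, hc.symm⟩

theorem setOf_forall_eval_pderiv_kleinQuartic_eq_zero [CharP K 2] :
    {p : ℙ K (Fin 3 → K) | ∀ i, eval p.rep (pderiv i (kleinQuartic K)) = 0} =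
      kleinPoint K '' {ε | ε ^ 7 = 1} := by
  ext p
  simp only [Set.mem_ofPred_eq, Set.mem_image, eq_comm (b := p), eq_kleinPoint_iff,
    forall_eval_pderiv_kleinQuartic_eq_zero_iff_exists_smul p.rep_nonzero]
  grind

end Projective

/-- the common zero locus in ℙ² of the partial derivatives of the Klein quartic
`B⁰ = x₁³x₂ + x₂³x₃ + x₃³x₁` in characteristic 2 consists exactly of the 7 points
`[1 : ε : ε⁵]` with `ε⁷ = 1`. -/
theorem stmt_2 (K : Type*) [Field K] [IsAlgClosed K] [CharP K 2]
    (B : MvPolynomial (Fin 3) K)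
    (hB : B = X 0 ^ 3 * X 1 + X 1 ^ 3 * X 2 + X 2 ^ 3 * X 0) :
    (∀ v : Fin 3 → K, v ≠ 0 →
      ((∀ i, eval v (pderiv i B) = 0) ↔
        ∃ ε c : K, c ≠ 0 ∧ ε ^ 7 = 1 ∧ v = c • ![1, ε, ε ^ 5])) ∧
    {p : Projectivization K (Fin 3 → K) | ∀ i, eval p.rep (pderiv i B) = 0}.ncard = 7 := by
  obtain rfl : B = kleinQuartic K := hB
  have h7 : ((7 : ℕ) : K) ≠ 0 := by
    rw [Ne, CharP.cast_eq_zero_iff K 2]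
    decide
  refine ⟨fun v hv => forall_eval_pderiv_kleinQuartic_eq_zero_iff_exists_smul hv, ?_⟩
  rw [setOf_forall_eval_pderiv_kleinQuartic_eq_zero,
    Set.ncard_image_of_injective _ kleinPoint_injective, ncard_setOf_pow_eq_one h7]
end

section
/- Let K be an algebraically closed field of characteristic 2 and B ∈ K[x₁,x₂,x₃]₄ a homogeneous quartic polynomial. If the critical locus 𝒞_B = {x ∈ ℙ²(K) : ∇B(x) = 0} is finite, then 𝒞_B consists of at most 7 points. -/
/-!
In characteristic 2, Euler's identity for the cubic `∂ᵢB` reads `∂ᵢB = ∑ⱼ xⱼ ∂ⱼ∂ᵢB`, and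
`∂ᵢ∂ᵢB = 0`; hence `∇B(x) = x × Y(x)` with `Y_k = ∂_{k+1}∂_{k+2}B`. These mixed partials of a
quartic only involve even exponents, so `Y(x) = N x^[2]` for a matrix `N`, and the critical points
are the lines `[x]` with `Ψ x ∈ K x` for the Frobenius-semilinear map `Ψ x = N x^[2]`.

A line with `Ψ x ≠ 0` contains exactly one nonzero fixed vector of `Ψ`. Over a `K`-independent
family of `d` fixed vectors spanning all of them, `Ψ` squares coordinates, so the fixed vectors
are the `0/1`-combinations of the family: at most `2^d - 1` such lines. The lines inside the
subspace `ker Ψ` are infinitely many as soon as there are two, and `ker Ψ` meets the span of the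
fixed vectors trivially; so either `ker Ψ = 0` and `d ≤ 3`, or there is one more point and
`d ≤ 2`. Either way there are at most `7` points.
-/

open MvPolynomial Matrix
open scoped LinearAlgebra.Projectivization

namespace MvPolynomial

variable {R σ : Type*} [CommRing R]

theorem pderiv_pderiv_comm (i j : σ) (p : MvPolynomial σ R) :
    pderiv i (pderiv j p) = pderiv j (pderiv i p) := by
  have h : ⁅pderiv i, pderiv j⁆ = (0 : Derivation R (MvPolynomial σ R) (MvPolynomial σ R)) :=
    derivation_ext fun k => by
      classical
      rw [Derivation.commutator_apply]
      simp [pderiv_X, Pi.single_apply, apply_ite]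
  rw [← sub_eq_zero, ← Derivation.commutator_apply, h, Derivation.zero_apply]

theorem eq_sum_monomial_single_two [Fintype σ] {p : MvPolynomial σ R}
    (h : ∀ m ∈ p.support, ∃ l, m = Finsupp.single l 2) :
    p = ∑ l, monomial (Finsupp.single l 2) (coeff (Finsupp.single l 2) p) := by
  classical
  have hsub : p.support ⊆ Finset.univ.image fun l => Finsupp.single l 2 := by
    intro m hm
    obtain ⟨l, rfl⟩ := h m hm
    exact Finset.mem_image_of_mem _ (Finset.mem_univ l)
  conv_lhs => rw [p.as_sum, Finset.sum_subset hsub fun m _ hm => by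
    rw [notMem_support_iff.mp hm, monomial_zero]]
  exact Finset.sum_image fun _ _ _ _ h => Finsupp.single_left_injective two_ne_zero h

variable [CharP R 2]

theorem IsHomogeneous.sum_X_mul_pderiv_of_odd {φ : MvPolynomial σ R} {n : ℕ} [Fintype σ]
    (h : φ.IsHomogeneous n) (hn : Odd n) : ∑ i, X i * pderiv i φ = φ := by
  rw [h.sum_X_mul_pderiv, nsmul_eq_mul, CharP.cast_eq_mod (MvPolynomial σ R) 2,
    Nat.odd_iff.mp hn, Nat.cast_one, one_mul]

theorem even_of_coeff_pderiv_ne_zero {i : σ} {p : MvPolynomial σ R} {m : σ →₀ ℕ}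
    (h : coeff m (pderiv i p) ≠ 0) : Even (m i) := by
  rw [coeff_pderiv] at h
  by_contra hodd
  refine h (mul_eq_zero_of_right _ ?_)
  exact_mod_cast (CharP.cast_eq_zero_iff R 2 _).mpr
    (even_iff_two_dvd.mp (Nat.not_even_iff_odd.mp hodd).add_one)

theorem pderiv_pderiv_self (i : σ) (p : MvPolynomial σ R) : pderiv i (pderiv i p) = 0 := by
  ext m
  rw [coeff_zero]
  by_contra h
  have h₁ := even_of_coeff_pderiv_ne_zero h
  rw [coeff_pderiv] at h
  have h₂ := even_of_coeff_pderiv_ne_zero (left_ne_zero_of_mul h)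
  rw [Finsupp.add_apply, Finsupp.single_eq_same] at h₂
  exact Nat.not_even_iff_odd.mpr h₁.add_one h₂

end MvPolynomial

theorem Finsupp.eq_single_of_degree_eq {σ : Type*} {m : σ →₀ ℕ} {l : σ} {n : ℕ}
    (hm : m.degree = n) (hl : m l = n) : m = Finsupp.single l n := by
  have hle : Finsupp.single l n ≤ m := by
    rw [Finsupp.single_le_iff]; exact hl.ge
  have hdeg := map_add Finsupp.degree (Finsupp.single l n) (m - Finsupp.single l n)
  rw [add_tsub_cancel_of_le hle, Finsupp.degree_single, hm, left_eq_add,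
    Finsupp.degree_eq_zero_iff, tsub_eq_zero_iff_le] at hdeg
  exact le_antisymm hdeg hle

theorem Finsupp.exists_eq_single_two_of_even {m : Fin 3 →₀ ℕ} (hm : m.degree = 2) {i j : Fin 3}
    (hij : i ≠ j) (hi : Even (m i)) (hj : Even (m j)) : ∃ l, m = Finsupp.single l 2 := by
  have hsum : m 0 + m 1 + m 2 = 2 := by rwa [Finsupp.degree_eq_sum, Fin.sum_univ_three] at hm
  rw [Nat.even_iff] at hi hj
  have : m 0 = 2 ∨ m 1 = 2 ∨ m 2 = 2 := by
    fin_cases i <;> fin_cases j <;> simp at hij hi hj <;> omega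
  obtain h | h | h := this <;> exact ⟨_, Finsupp.eq_single_of_degree_eq hm h⟩

namespace Projectivization

variable {K V : Type*} [Field K] [AddCommGroup V] [Module K V]

theorem linearIndependent_rep_pair {p q : ℙ K V} (hpq : p ≠ q) :
    LinearIndependent K ![p.rep, q.rep] := by
  rw [LinearIndependent.pair_iff' p.rep_nonzero]
  intro a ha
  apply hpq
  have ha0 : a ≠ 0 := by
    rintro rfl
    exact q.rep_nonzero (by rw [← ha, zero_smul])
  rw [← p.mk_rep, ← q.mk_rep, mk_eq_mk_iff']
  exact ⟨a⁻¹, by rw [← ha, smul_smul, inv_mul_cancel₀ ha0, one_smul]⟩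

theorem subsingleton_setOf_rep_mem_of_finite [Infinite K] {W : Submodule K V}
    (h : {p : ℙ K V | p.rep ∈ W}.Finite) : {p : ℙ K V | p.rep ∈ W}.Subsingleton := by
  intro p hp q hq
  by_contra hpq
  have hind := linearIndependent_rep_pair hpq
  have hne (t : K) : p.rep + t • q.rep ≠ 0 := by
    intro h0
    exact one_ne_zero (LinearIndependent.pair_iff.mp hind 1 t (by rwa [one_smul])).1
  refine Set.infinite_of_injective_forall_mem (f := fun t => mk K _ (hne t)) ?_ ?_ h
  · intro t t' htt'
    obtain ⟨a, ha⟩ := (mk_eq_mk_iff' K _ _ (hne t) (hne t')).mp htt'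
    have := LinearIndependent.pair_iff.mp hind (a - 1) (a * t' - t) (by
      rw [← sub_eq_zero.mpr ha]; module)
    rw [sub_eq_zero.mp this.1, one_mul] at this
    exact (sub_eq_zero.mp this.2).symm
  · intro t
    obtain ⟨a, ha⟩ := exists_smul_eq_mk_rep K _ (hne t)
    rw [Set.mem_ofPred_eq, ← ha]
    exact W.smul_of_tower_mem a (W.add_mem hp (W.smul_mem t hq))

end Projectivization

namespace LinearMap

variable {K V ι : Type*} [Field K] [AddCommGroup V] [Module K V]

def eigenlines {σ : K →+* K} (f : V →ₛₗ[σ] V) : Set (ℙ K V) :=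
  {p | ∃ c : K, f p.rep = c • p.rep}

theorem ncard_eigenlines_le_add {σ : K →+* K} {f : V →ₛₗ[σ] V} (hfin : f.eigenlines.Finite) :
    f.eigenlines.ncard ≤ {p : ℙ K V | p.rep ∈ ker f}.ncard +
      {p : ℙ K V | ∃ c ≠ (0 : K), f p.rep = c • p.rep}.ncard := by
  refine (Set.ncard_le_ncard (t := {p : ℙ K V | p.rep ∈ ker f} ∪ _) ?_ ?_).trans
    (Set.ncard_union_le _ _)
  · rintro p ⟨c, hc⟩
    rcases eq_or_ne c 0 with rfl | hc0
    · rw [zero_smul] at hc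
      exact Or.inl hc
    · exact Or.inr ⟨c, hc0, hc⟩
  · exact hfin.subset (Set.union_subset (fun p hp => ⟨0, by rw [zero_smul]; exact hp⟩)
      fun p ⟨c, _, hc⟩ => ⟨c, hc⟩)

variable [CharP K 2]
  (Ψ : V →ₛₗ[_root_.frobenius K 2] V) [Fintype ι] {b : ι → V}

theorem map_sum_smul_of_map_eq_self (hb : ∀ i, Ψ (b i) = b i) (c : ι → K) :
    Ψ (∑ i, c i • b i) = ∑ i, c i ^ 2 • b i := by
  simp only [map_sum, map_smulₛₗ, hb, _root_.frobenius_def]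

variable {Ψ}

theorem eq_zero_of_map_sum_smul_eq_zero (hb : ∀ i, Ψ (b i) = b i) (hli : LinearIndependent K b)
    {c : ι → K} (hc : Ψ (∑ i, c i • b i) = 0) (i : ι) : c i = 0 := by
  rw [map_sum_smul_of_map_eq_self Ψ hb] at hc
  exact pow_eq_zero_iff two_ne_zero |>.mp (Fintype.linearIndependent_iff.mp hli _ hc i)

theorem notMem_span_of_map_eq_zero (hb : ∀ i, Ψ (b i) = b i) (hli : LinearIndependent K b)
    {v : V} (hv : Ψ v = 0) (hv0 : v ≠ 0) : v ∉ Submodule.span K (Set.range b) := by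
  intro h
  obtain ⟨c, rfl⟩ := (Submodule.mem_span_range_iff_exists_fun K).mp h
  apply hv0
  simp [eq_zero_of_map_sum_smul_eq_zero hb hli hv]

theorem eq_zero_or_eq_one_of_map_sum_smul_eq_self (hb : ∀ i, Ψ (b i) = b i)
    (hli : LinearIndependent K b) {c : ι → K} (hc : Ψ (∑ i, c i • b i) = ∑ i, c i • b i)
    (i : ι) : c i = 0 ∨ c i = 1 := by
  rw [map_sum_smul_of_map_eq_self Ψ hb, ← sub_eq_zero, ← Finset.sum_sub_distrib] at hc
  simp_rw [← sub_smul] at hc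
  have := Fintype.linearIndependent_iff.mp hli _ hc i
  have hmul : c i * (c i - 1) = 0 := by linear_combination this
  exact (mul_eq_zero.mp hmul).imp_right sub_eq_zero.mp

theorem setOf_map_eq_self_subset_range_sum (hb : ∀ i, Ψ (b i) = b i)
    (hli : LinearIndependent K b) (hspan : {v | Ψ v = v} ⊆ Submodule.span K (Set.range b)) :
    {v | Ψ v = v} ⊆ Set.range fun t : Finset ι => ∑ i ∈ t, b i := by
  classical
  intro v hv
  obtain ⟨c, rfl⟩ := (Submodule.mem_span_range_iff_exists_fun K).mp (hspan hv)
  refine ⟨({i | c i = 1} : Finset ι), ?_⟩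
  dsimp only
  rw [Finset.sum_filter]
  refine Finset.sum_congr rfl fun i _ => ?_
  rcases eq_zero_or_eq_one_of_map_sum_smul_eq_self hb hli hv i with h | h <;> simp [h]

theorem ncard_setOf_map_eq_self_le (hb : ∀ i, Ψ (b i) = b i) (hli : LinearIndependent K b)
    (hspan : {v | Ψ v = v} ⊆ Submodule.span K (Set.range b)) :
    {v | Ψ v = v}.Finite ∧ {v | Ψ v = v}.ncard ≤ 2 ^ Fintype.card ι := by
  have hsub := setOf_map_eq_self_subset_range_sum hb hli hspan
  refine ⟨(Set.finite_range _).subset hsub, (Set.ncard_le_ncard hsub (Set.finite_range _)).trans ?_⟩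
  rw [← Set.image_univ]
  refine le_trans Set.ncard_image_le ?_
  rw [Set.ncard_univ, Nat.card_eq_fintype_card, Fintype.card_finset]

theorem ncard_setOf_map_rep_eq_smul_ne_zero_le (hfin : {v | Ψ v = v}.Finite) :
    {p : ℙ K V | ∃ c ≠ (0 : K), Ψ p.rep = c • p.rep}.ncard ≤ {v | Ψ v = v}.ncard - 1 := by
  set S : Set {v : V // v ≠ 0} := {v | Ψ v = v}
  have hS : Subtype.val '' S = {v | Ψ v = v} \ {0} := by
    ext v
    simp [S, and_comm]
  have hSfin : S.Finite := (hS ▸ hfin.sdiff).of_finite_image Subtype.val_injective.injOn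
  have hsub : {p : ℙ K V | ∃ c ≠ (0 : K), Ψ p.rep = c • p.rep} ⊆ Projectivization.mk' K '' S := by
    rintro p ⟨c, hc, hcp⟩
    refine ⟨⟨c⁻¹ • p.rep, smul_ne_zero (inv_ne_zero hc) p.rep_nonzero⟩, ?_, ?_⟩
    · show Ψ (c⁻¹ • p.rep) = c⁻¹ • p.rep
      rw [map_smulₛₗ, hcp, _root_.frobenius_def, smul_smul]
      congr 1
      field_simp
    · conv_rhs => rw [← p.mk_rep]
      exact (Projectivization.mk_eq_mk_iff' K _ _ _ _).mpr ⟨c⁻¹, rfl⟩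
  calc _ ≤ (Projectivization.mk' K '' S).ncard := Set.ncard_le_ncard hsub (hSfin.image _)
    _ ≤ S.ncard := Set.ncard_image_le hSfin
    _ = (Subtype.val '' S).ncard := (Set.ncard_image_of_injective _ Subtype.val_injective).symm
    _ = _ := by rw [hS, Set.ncard_sdiff_singleton_of_mem (by simp)]

theorem ncard_eigenlines_le [Infinite K] [FiniteDimensional K V] (hfin : Ψ.eigenlines.Finite) :
    Ψ.eigenlines.ncard ≤ 2 ^ Module.finrank K V - 1 := by
  obtain ⟨κ, a, -, hspan, hli⟩ :=
    exists_linearIndependent' K (Subtype.val : {v : V // Ψ v = v} → V)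
  have := hli.finite
  have := Fintype.ofFinite κ
  have hb (i : κ) : Ψ (a i) = a i := (a i).2
  obtain ⟨hfixfin, hfix⟩ := ncard_setOf_map_eq_self_le hb hli <| by
    change _ ⊆ ((Submodule.span K (Set.range (Subtype.val ∘ a)) : Set V))
    rw [hspan, Subtype.range_coe_subtype]
    exact Submodule.subset_span
  have hP₁ :=
    (ncard_setOf_map_rep_eq_smul_ne_zero_le hfixfin).trans (Nat.sub_le_sub_right hfix 1)
  have hP := ncard_eigenlines_le_add hfin
  have hP₀fin : {p : ℙ K V | p.rep ∈ ker Ψ}.Finite :=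
    hfin.subset fun p hp => ⟨0, by rw [zero_smul]; exact hp⟩
  rcases Set.eq_empty_or_nonempty {p : ℙ K V | p.rep ∈ ker Ψ} with h₀ | ⟨p, hp⟩
  · have := Nat.pow_le_pow_right two_pos hli.fintype_card_le_finrank
    rw [h₀, Set.ncard_empty] at hP
    omega
  · have hP₀ := (Set.ncard_le_one hP₀fin).mpr
      (Projectivization.subsingleton_setOf_rep_mem_of_finite hP₀fin)
    have hd :=
      (hli.option (notMem_span_of_map_eq_zero hb hli hp p.rep_nonzero)).fintype_card_le_finrank
    rw [Fintype.card_option] at hd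
    have := Nat.pow_lt_pow_right one_lt_two hd
    have := Nat.one_le_two_pow (n := Fintype.card κ)
    omega

end LinearMap

def piFrobenius (ι K : Type*) [CommRing K] (p : ℕ) [ExpChar K p] :
    (ι → K) →ₛₗ[frobenius K p] (ι → K) where
  toFun x i := x i ^ p
  map_add' x y := _root_.funext fun i => add_pow_expChar (x i) (y i) p
  map_smul' c x := _root_.funext fun i => mul_pow c (x i) p

section Quartic

variable {K : Type*} [Field K] [CharP K 2] {B : MvPolynomial (Fin 3) K}

theorem exists_eq_single_two_of_mem_support_pderiv_pderiv (hB : B.IsHomogeneous 4) {i j : Fin 3}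
    (hij : i ≠ j) {m : Fin 3 →₀ ℕ} (hm : m ∈ (pderiv i (pderiv j B)).support) :
    ∃ l, m = Finsupp.single l 2 := by
  rw [mem_support_iff] at hm
  have hdeg : m.degree = 2 := by
    by_contra h
    exact hm (hB.pderiv.pderiv.coeff_eq_zero h)
  refine Finsupp.exists_eq_single_two_of_even hdeg hij (even_of_coeff_pderiv_ne_zero hm) ?_
  rw [pderiv_pderiv_comm] at hm
  exact even_of_coeff_pderiv_ne_zero hm

/-- Row `k` lists the coefficients `a_l` of `∂_{k+1}∂_{k+2}B = ∑ₗ a_l X_l²` (indices mod 3). -/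
noncomputable def sqCoeffMatrix (B : MvPolynomial (Fin 3) K) : Matrix (Fin 3) (Fin 3) K :=
  Matrix.of fun k l => coeff (Finsupp.single l 2) (pderiv (k + 1) (pderiv (k + 2) B))

theorem eval_pderiv_pderiv_eq_mulVec (hB : B.IsHomogeneous 4) (x : Fin 3 → K) (k : Fin 3) :
    eval x (pderiv (k + 1) (pderiv (k + 2) B)) =
      (sqCoeffMatrix B *ᵥ piFrobenius (Fin 3) K 2 x) k := by
  conv_lhs => rw [eq_sum_monomial_single_two fun m hm =>
    exists_eq_single_two_of_mem_support_pderiv_pderiv hB (by fin_cases k <;> decide) hm]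
  simp [eval_monomial, Matrix.mulVec, dotProduct, sqCoeffMatrix, piFrobenius]

theorem eval_pderiv_eq_cross (hB : B.IsHomogeneous 4) (x : Fin 3 → K) :
    (fun i => eval x (pderiv i B)) = x ⨯₃ (sqCoeffMatrix B *ᵥ piFrobenius (Fin 3) K 2 x) := by
  have hE (i : Fin 3) : eval x (pderiv i B) = ∑ j, x j * eval x (pderiv j (pderiv i B)) := by
    conv_lhs => rw [← (hB.pderiv (i := i)).sum_X_mul_pderiv_of_odd (by decide)]
    simp [map_sum]
  have hY := eval_pderiv_pderiv_eq_mulVec hB x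
  ext i
  rw [cross_apply, ← hY 0, ← hY 1, ← hY 2, hE]
  fin_cases i <;>
    simp [Fin.sum_univ_three, pderiv_pderiv_self, pderiv_pderiv_comm (1 : Fin 3) 0,
      pderiv_pderiv_comm (2 : Fin 3) 0, pderiv_pderiv_comm (2 : Fin 3) 1, CharTwo.sub_eq_add,
      add_comm]

noncomputable def criticalMap (B : MvPolynomial (Fin 3) K) :
    (Fin 3 → K) →ₛₗ[frobenius K 2] (Fin 3 → K) :=
  (sqCoeffMatrix B).mulVecLin ∘ₛₗ piFrobenius (Fin 3) K 2

theorem setOf_eval_pderiv_eq_zero_eq (hB : B.IsHomogeneous 4) :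
    {p : ℙ K (Fin 3 → K) | ∀ i, eval p.rep (pderiv i B) = 0} = (criticalMap B).eigenlines := by
  ext p
  rw [Set.mem_ofPred_eq, LinearMap.eigenlines, Set.mem_ofPred_eq, ← funext_iff, ← Pi.zero_def,
    eval_pderiv_eq_cross hB, ← not_ne_iff, crossProduct_ne_zero_iff_linearIndependent,
    LinearIndependent.pair_iff' p.rep_nonzero, not_forall_not]
  exact exists_congr fun c => eq_comm

end Quartic

/-- over an algebraically closed field of characteristic 2, the critical locus
of a homogeneous quartic in three variables, if finite, has at most 7 points. -/
theorem stmt_4 (K : Type*) [Field K] [IsAlgClosed K] [CharP K 2]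
    (B : MvPolynomial (Fin 3) K) (hB : B.IsHomogeneous 4)
    (hfin : {p : Projectivization K (Fin 3 → K) |
        ∀ i, eval p.rep (pderiv i B) = 0}.Finite) :
    {p : Projectivization K (Fin 3 → K) |
        ∀ i, eval p.rep (pderiv i B) = 0}.ncard ≤ 7 := by
  rw [setOf_eval_pderiv_eq_zero_eq hB] at hfin ⊢
  simpa using (criticalMap B).ncard_eigenlines_le hfin
end

section
/- Let K be an algebraically closed field of characteristic 2 and X ⊂ ℙ³(K) a quartic surface whose dual variety (the closure of the image of the Gauss map x ↦ ∇F(x)) is a line. Then X is not normal, i.e., Sing(X) is infinite. -/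
/-!
Over a field of characteristic 2, `pderiv` kills every `C k * m ^ 2`, so the given quartic is
`x y ℓ²` modulo such terms, where `ℓ = αx + βy + γz + δw` with `α² = f₁, β² = f₂, γ² = d, δ² = e`.
Hence every partial derivative of `F` is a multiple of `ℓ²`, and `Sing X` contains the plane
section `X ∩ {ℓ = 0}`. Over an algebraically closed field a surface meets any plane in infinitely
many points: choose a point `w` of the plane off `X` (or any point if the plane lies in `X`);
every line of the plane through `w` meets `X`, and these lines form an infinite pencil.
-/

open MvPolynomial Module

theorem exists_linearIndependent_fin_three_of_ne_zero {K M : Type*} [Field K] [AddCommGroup M]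
    [Module K M] (h : 3 ≤ finrank K M) {x : M} (hx : x ≠ 0) :
    ∃ b : Fin 3 → M, LinearIndependent K b ∧ b 0 = x := by
  obtain ⟨y, hy⟩ := exists_linearIndependent_pair_of_one_lt_finrank (R := K) (by omega) hx
  obtain ⟨z, hz⟩ := exists_linearIndependent_snoc_of_lt_finrank hy (by omega)
  exact ⟨_, hz, rfl⟩

theorem Projectivization.eq_of_mk_linearCombination_eq {K V ι : Type*} [Field K] [AddCommGroup V]
    [Module K V] [Fintype ι] {b : ι → V} (hb : LinearIndependent K b) {x y : ι → K} {i : ι}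
    (hx : x i = 1) (hy : y i = 1) (hx0 : Fintype.linearCombination K b x ≠ 0)
    (hy0 : Fintype.linearCombination K b y ≠ 0)
    (h : Projectivization.mk K _ hx0 = Projectivization.mk K _ hy0) : x = y := by
  obtain ⟨c, hc⟩ := (Projectivization.mk_eq_mk_iff' K _ _ hx0 hy0).mp h
  rw [← map_smul] at hc
  have hcy : c • y = x := hb.fintypeLinearCombination_injective hc
  have hc1 : c = 1 := by simpa [hx, hy] using congrFun hcy i
  rw [← hcy, hc1, one_smul]

namespace MvPolynomial

variable {σ R K : Type*}

theorem exists_polynomial_eval_eq_eval_add_smul [CommRing R] (F : MvPolynomial σ R) (v w : σ → R) :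
    ∃ h : Polynomial R, ∀ s : R, h.eval s = eval (v + s • w) F := by
  refine ⟨eval₂ Polynomial.C (fun i => Polynomial.C (v i) + Polynomial.C (w i) * Polynomial.X) F,
    fun s => ?_⟩
  rw [polynomial_eval_eval₂, eval]
  congr
  · ext; simp
  · funext i; simp [mul_comm s]

theorem pderiv_sq_eq_zero [CommRing R] [CharP R 2] (i : σ) (p : MvPolynomial σ R) :
    pderiv i (p ^ 2) = 0 := by
  rw [pderiv_pow, Nat.cast_ofNat, CharTwo.two_eq_zero, zero_mul, zero_mul]

theorem pderiv_mul_sq [CommRing R] [CharP R 2] (i : σ) (p q : MvPolynomial σ R) :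
    pderiv i (p * q ^ 2) = pderiv i p * q ^ 2 := by
  rw [pderiv_mul, pderiv_sq_eq_zero, mul_zero, add_zero]

section AlgClosed

variable [Field K] [IsAlgClosed K] {F : MvPolynomial σ K} {n : ℕ}

theorem exists_eval_add_smul_eq_zero
    (hF : ∀ (c : K) (v : σ → K), eval (c • v) F = c ^ n * eval v F) (hn : n ≠ 0)
    {w : σ → K} (hw : eval w F ≠ 0) (v : σ → K) : ∃ s : K, eval (v + s • w) F = 0 := by
  by_contra! hne
  obtain ⟨h, hh⟩ := exists_polynomial_eval_eq_eval_add_smul F v w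
  obtain ⟨k, hk⟩ : ∃ k, h = Polynomial.C k := by
    refine ⟨h.coeff 0, Polynomial.eq_C_of_degree_le_zero (le_of_not_gt fun hpos => ?_)⟩
    obtain ⟨s, hs⟩ := IsAlgClosed.exists_root h hpos.ne'
    exact hne s (hh s ▸ hs)
  -- For `r ≠ 0`, `F (w + r • v) = r ^ n * F (v + r⁻¹ • w) = r ^ n * k`; comparing polynomials in
  -- `r` and setting `r = 0` gives `F w = 0`.
  obtain ⟨g, hg⟩ := exists_polynomial_eval_eq_eval_add_smul F w v
  have hgk : g = Polynomial.C k * Polynomial.X ^ n := by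
    refine sub_eq_zero.mp (Polynomial.eq_zero_of_infinite_isRoot _
      ((Set.finite_singleton 0).infinite_compl.mono fun r hr => ?_))
    have : w + r • v = r • (v + r⁻¹ • w) := by
      rw [smul_add, smul_smul, mul_inv_cancel₀ hr, one_smul, add_comm]
    rw [Set.mem_ofPred_eq, Polynomial.IsRoot, Polynomial.eval_sub, hg, this, hF, ← hh, hk]
    simp only [Polynomial.eval_C, Polynomial.eval_mul, Polynomial.eval_pow, Polynomial.eval_X]
    ring
  apply hw
  simpa [hgk, hn] using (hg 0).symm

theorem exists_forall_exists_eval_add_smul_eq_zero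
    (hF : ∀ (c : K) (v : σ → K), eval (c • v) F = c ^ n * eval v F) (hn : n ≠ 0)
    {W : Submodule K (σ → K)} (hW : W ≠ ⊥) :
    ∃ w ∈ W, w ≠ 0 ∧ ∀ v ∈ W, ∃ s : K, eval (v + s • w) F = 0 := by
  by_cases hvan : ∀ w ∈ W, eval w F = 0
  · obtain ⟨w, hwW, hw0⟩ := Submodule.exists_mem_ne_zero_of_ne_bot hW
    exact ⟨w, hwW, hw0, fun v hv => ⟨0, by rw [zero_smul, add_zero]; exact hvan v hv⟩⟩
  · push Not at hvan
    obtain ⟨w, hwW, hw⟩ := hvan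
    refine ⟨w, hwW, ?_, fun v _ => exists_eval_add_smul_eq_zero hF hn hw v⟩
    rintro rfl
    exact hw (by simpa [hn] using hF 0 0)

theorem infinite_setOf_rep_mem_and_eval_eq_zero [Fintype σ]
    (hF : ∀ (c : K) (v : σ → K), eval (c • v) F = c ^ n * eval v F) (hn : n ≠ 0)
    (W : Submodule K (σ → K)) (hW : 3 ≤ finrank K W) :
    {p : Projectivization K (σ → K) | p.rep ∈ W ∧ eval p.rep F = 0}.Infinite := by
  have hW0 : W ≠ ⊥ := by
    rintro rfl
    simp at hW
  obtain ⟨w, hwW, hw0, hroot⟩ := exists_forall_exists_eval_add_smul_eq_zero hF hn hW0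
  obtain ⟨b, hb, hb0⟩ := exists_linearIndependent_fin_three_of_ne_zero hW
    (x := (⟨w, hwW⟩ : W)) (by simpa using hw0)
  set b' : Fin 3 → σ → K := W.subtype ∘ b
  have hb' : LinearIndependent K b' := hb.map' W.subtype W.ker_subtype
  choose s hs using fun t : K => hroot (b' 1 + t • b' 2) (W.add_mem (b 1).2 (W.smul_mem t (b 2).2))
  set x : K → Fin 3 → K := fun t => ![s t, 1, t]
  have hx : ∀ t, Fintype.linearCombination K b' (x t) = b' 1 + t • b' 2 + s t • w := by
    intro t
    simp only [x, b', Fintype.linearCombination_apply, Fin.sum_univ_three, Function.comp_apply,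
      Submodule.coe_subtype, Matrix.cons_val_zero, Matrix.cons_val_one, Matrix.cons_val, hb0,
      one_smul]
    abel
  have hx0 : ∀ t, Fintype.linearCombination K b' (x t) ≠ 0 := fun t h =>
    one_ne_zero (congrFun (hb'.fintypeLinearCombination_injective (h.trans (map_zero _).symm)) 1)
  refine Set.infinite_of_injective_forall_mem
    (f := fun t => Projectivization.mk K _ (hx0 t)) (fun t t' h => ?_) (fun t => ?_)
  · exact congrFun (Projectivization.eq_of_mk_linearCombination_eq hb' (i := 1) rfl rfl _ _ h) 2
  · obtain ⟨c, hc⟩ := Projectivization.exists_smul_eq_mk_rep K _ (hx0 t)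
    rw [Units.smul_def] at hc
    have hmem : Fintype.linearCombination K b' (x t) ∈ W := by
      rw [Fintype.linearCombination_apply]
      exact W.sum_mem fun i _ => W.smul_mem _ (b i).2
    exact ⟨hc ▸ W.smul_mem _ hmem, by rw [← hc, hF, hx, hs, mul_zero]⟩

end AlgClosed

end MvPolynomial

theorem stmt_14_general (K : Type*) [Field K] [IsAlgClosed K] [CharP K 2]
    (a b c d₁ d₂ d e₁ e₂ e f₁ f₂ q₁ q₂ q₃ : K)
    (F : MvPolynomial (Fin 4) K)
    (hF : F = C a * X 2 ^ 4 + C b * X 3 ^ 4 + C c * X 2 ^ 2 * X 3 ^ 2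
        + X 2 ^ 2 * (C d₁ * X 0 ^ 2 + C d₂ * X 1 ^ 2 + C d * X 0 * X 1)
        + X 3 ^ 2 * (C e₁ * X 0 ^ 2 + C e₂ * X 1 ^ 2 + C e * X 0 * X 1)
        + (C q₁ * X 0 ^ 2 + C q₂ * X 1 ^ 2 + C q₃ * X 0 * X 1) ^ 2
        + C f₁ * X 0 ^ 3 * X 1 + C f₂ * X 0 * X 1 ^ 3) :
    {p : Projectivization K (Fin 4 → K) |
        eval p.rep F = 0 ∧ ∀ i, eval p.rep (pderiv i F) = 0}.Infinite := by
  obtain ⟨α, hα⟩ := IsAlgClosed.exists_pow_nat_eq f₁ two_pos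
  obtain ⟨β, hβ⟩ := IsAlgClosed.exists_pow_nat_eq f₂ two_pos
  obtain ⟨γ, hγ⟩ := IsAlgClosed.exists_pow_nat_eq d two_pos
  obtain ⟨δ, hδ⟩ := IsAlgClosed.exists_pow_nat_eq e two_pos
  set ℓ : MvPolynomial (Fin 4) K := C α * X 0 + C β * X 1 + C γ * X 2 + C δ * X 3
  have hF' : F = C a * (X 2 ^ 2) ^ 2 + C b * (X 3 ^ 2) ^ 2 + C c * (X 2 * X 3) ^ 2
      + C d₁ * (X 0 * X 2) ^ 2 + C d₂ * (X 1 * X 2) ^ 2 + C e₁ * (X 0 * X 3) ^ 2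
      + C e₂ * (X 1 * X 3) ^ 2 + (C q₁ * X 0 ^ 2 + C q₂ * X 1 ^ 2 + C q₃ * X 0 * X 1) ^ 2
      + X 0 * X 1 * ℓ ^ 2 := by
    simp only [ℓ, CharTwo.add_sq, mul_pow, ← map_pow, hα, hβ, hγ, hδ, hF]
    ring
  have hpderiv (i : Fin 4) : pderiv i F = pderiv i (X 0 * X 1) * ℓ ^ 2 := by
    simp only [hF', map_add, pderiv_mul_sq, pderiv_sq_eq_zero, pderiv_C, zero_mul, zero_add]
  have hhom (t : K) (v : Fin 4 → K) : eval (t • v) F = t ^ 4 * eval v F := by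
    simp only [hF, eval_add, eval_mul, eval_pow, eval_C, eval_X, Pi.smul_apply, smul_eq_mul]
    ring
  set φ : (Fin 4 → K) →ₗ[K] K := Fintype.linearCombination K ![α, β, γ, δ]
  have hφ (v : Fin 4 → K) : φ v = eval v ℓ := by
    simp only [φ, ℓ, Fintype.linearCombination_apply, smul_eq_mul, Fin.sum_univ_four,
      Matrix.cons_val_zero, Matrix.cons_val_one, Matrix.cons_val, map_add, map_mul, eval_C, eval_X]
    ring
  have hker : 3 ≤ finrank K (LinearMap.ker φ) := by
    have hsum := φ.finrank_range_add_finrank_ker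
    have hrange := (LinearMap.range φ).finrank_le
    rw [finrank_fin_fun] at hsum
    rw [finrank_self] at hrange
    omega
  refine (infinite_setOf_rep_mem_and_eval_eq_zero hhom four_ne_zero _ hker).mono ?_
  rintro p ⟨hpW, hpF⟩
  refine ⟨hpF, fun i => ?_⟩
  rw [hpderiv, eval_mul, eval_pow, ← hφ, LinearMap.mem_ker.mp hpW]
  ring

/-- in characteristic 2, a quartic surface whose dual variety (Gauss image) is
a line — i.e., which in suitable coordinates `x = X 0, y = X 1, z = X 2, w = X 3` has
equation `az⁴ + bw⁴ + cz²w² + z²D(x,y) + w²E(x,y) + f(x,y) = 0` with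
`D = d₁x² + d₂y² + dxy`, `E = e₁x² + e₂y² + exy`, `f = q(x,y)² + f₁x³y + f₂xy³` — is not
normal: its singular locus is infinite. -/
theorem stmt_14 (K : Type*) [Field K] [IsAlgClosed K] [CharP K 2]
    (a b c d₁ d₂ d e₁ e₂ e f₁ f₂ q₁ q₂ q₃ : K)
    (F : MvPolynomial (Fin 4) K)
    (hF : F = C a * X 2 ^ 4 + C b * X 3 ^ 4 + C c * X 2 ^ 2 * X 3 ^ 2
        + X 2 ^ 2 * (C d₁ * X 0 ^ 2 + C d₂ * X 1 ^ 2 + C d * X 0 * X 1)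
        + X 3 ^ 2 * (C e₁ * X 0 ^ 2 + C e₂ * X 1 ^ 2 + C e * X 0 * X 1)
        + (C q₁ * X 0 ^ 2 + C q₂ * X 1 ^ 2 + C q₃ * X 0 * X 1) ^ 2
        + C f₁ * X 0 ^ 3 * X 1 + C f₂ * X 0 * X 1 ^ 3)
    (hirr : Irreducible F) :
    {p : Projectivization K (Fin 4 → K) |
        eval p.rep F = 0 ∧ ∀ i, eval p.rep (pderiv i F) = 0}.Infinite :=
  stmt_14_general K a b c d₁ d₂ d e₁ e₂ e f₁ f₂ q₁ q₂ q₃ F hF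
end

section
/- Let K be an algebraically closed field of characteristic 2. The symmetric quartic surface X = {σ₁⁴·a₁ + σ₁²σ₂·a₂ + σ₁σ₃·a₃ + σ₄·a₄ + σ₂²·β = 0} ⊂ ℙ³(K) contains the point (0,0,1,1) as a singular point if and only if β = 0, and contains the point (0,0,0,1) as a singular point if and only if a₁ = a₂ = 0. -/
open MvPolynomial

section aux
open Finset
variable {R : Type*} [CommRing R]

lemma esymm_four_two : esymm (Fin 4) R 2 =
    X 0 * X 1 + X 0 * X 2 + X 0 * X 3 + X 1 * X 2 + X 1 * X 3 + X 2 * X 3 := by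
  rw [esymm, show (powersetCard 2 (univ : Finset (Fin 4))) =
      {({0,1} : Finset (Fin 4)), {0,2}, {0,3}, {1,2}, {1,3}, {2,3}} from by decide]
  rw [Finset.sum_insert (by decide), Finset.sum_insert (by decide), Finset.sum_insert (by decide),
    Finset.sum_insert (by decide), Finset.sum_insert (by decide), Finset.sum_singleton]
  rw [Finset.prod_insert (by decide), Finset.prod_singleton, Finset.prod_insert (by decide),
    Finset.prod_singleton, Finset.prod_insert (by decide), Finset.prod_singleton,
    Finset.prod_insert (by decide), Finset.prod_singleton, Finset.prod_insert (by decide),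
    Finset.prod_singleton, Finset.prod_insert (by decide), Finset.prod_singleton]
  ring

lemma esymm_four_three : esymm (Fin 4) R 3 =
    X 0 * X 1 * X 2 + X 0 * X 1 * X 3 + X 0 * X 2 * X 3 + X 1 * X 2 * X 3 := by
  rw [esymm, show (powersetCard 3 (univ : Finset (Fin 4))) =
      {({0,1,2} : Finset (Fin 4)), {0,1,3}, {0,2,3}, {1,2,3}} from by decide]
  rw [Finset.sum_insert (by decide), Finset.sum_insert (by decide), Finset.sum_insert (by decide),
    Finset.sum_singleton]
  rw [Finset.prod_insert (by decide), Finset.prod_insert (by decide), Finset.prod_singleton,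
    Finset.prod_insert (by decide), Finset.prod_insert (by decide), Finset.prod_singleton,
    Finset.prod_insert (by decide), Finset.prod_insert (by decide), Finset.prod_singleton,
    Finset.prod_insert (by decide), Finset.prod_insert (by decide), Finset.prod_singleton]
  ring

lemma esymm_four_four : esymm (Fin 4) R 4 = X 0 * X 1 * X 2 * X 3 := by
  rw [esymm, show (powersetCard 4 (univ : Finset (Fin 4))) = {(univ : Finset (Fin 4))} from by
    decide]
  rw [Finset.sum_singleton, Fin.prod_univ_four]

end aux

set_option maxHeartbeats 1000000 in
/-- for the symmetric quartic
`F = a₁σ₁⁴ + a₂σ₁²σ₂ + a₃σ₁σ₃ + a₄σ₄ + βσ₂²` over an algebraically closed field of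
characteristic 2, the point `(0,0,1,1)` is a singular point iff `β = 0`, and the point
`(0,0,0,1)` is a singular point iff `a₁ = a₂ = 0`. -/
theorem stmt_15 (K : Type*) [Field K] [IsAlgClosed K] [CharP K 2]
    (a₁ a₂ a₃ a₄ β : K) (F : MvPolynomial (Fin 4) K)
    (hF : F = C a₁ * (esymm (Fin 4) K 1) ^ 4
        + C a₂ * (esymm (Fin 4) K 1) ^ 2 * esymm (Fin 4) K 2
        + C a₃ * esymm (Fin 4) K 1 * esymm (Fin 4) K 3
        + C a₄ * esymm (Fin 4) K 4
        + C β * (esymm (Fin 4) K 2) ^ 2) :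
    ((eval (![0, 0, 1, 1] : Fin 4 → K) F = 0 ∧
        ∀ i, eval (![0, 0, 1, 1] : Fin 4 → K) (pderiv i F) = 0) ↔ β = 0) ∧
    ((eval (![0, 0, 0, 1] : Fin 4 → K) F = 0 ∧
        ∀ i, eval (![0, 0, 0, 1] : Fin 4 → K) (pderiv i F) = 0) ↔ a₁ = 0 ∧ a₂ = 0) := by
  have h2 : (2 : K) = 0 := by
    have := CharP.cast_eq_zero K 2; rwa [Nat.cast_ofNat] at this
  subst hF
  rw [esymm_one, Fin.sum_univ_four, esymm_four_two, esymm_four_three, esymm_four_four]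
  constructor
  · constructor
    · rintro ⟨h, -⟩
      simp only [map_add, map_mul, map_pow, eval_C, eval_X, eval_add, eval_mul, eval_pow,
        Matrix.cons_val_zero, Matrix.cons_val_one, Matrix.head_cons, Matrix.cons_val_two,
        Matrix.tail_cons, Matrix.cons_val_three] at h
      ring_nf at h
      linear_combination h - (8 * a₁ + 2 * a₂) * h2
    · rintro rfl
      refine ⟨?_, fun i => ?_⟩
      · simp only [map_add, map_mul, map_pow, eval_C, eval_X, eval_add, eval_mul, eval_pow,
          Matrix.cons_val_zero, Matrix.cons_val_one, Matrix.head_cons, Matrix.cons_val_two,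
          Matrix.tail_cons, Matrix.cons_val_three]
        ring_nf
        linear_combination (8 * a₁ + 2 * a₂) * h2
      · simp only [map_add, pderiv_C_mul, pderiv_mul, pderiv_pow, pderiv_X]
        simp only [map_add, map_mul, map_pow, eval_C, eval_X, map_ofNat, eval_add, eval_mul,
          eval_pow, Matrix.cons_val_zero, Matrix.cons_val_one, Matrix.head_cons,
          Matrix.cons_val_two, Matrix.tail_cons, Matrix.cons_val_three, map_one]
        fin_cases i <;> simp [Pi.single_apply] <;> ring_nf <;>
          first
          | linear_combination (16 * a₁ + 6 * a₂ + a₃) * h2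
          | linear_combination (16 * a₁ + 4 * a₂) * h2
  · constructor
    · rintro ⟨h, hp⟩
      have h0 := hp 0
      simp only [map_add, pderiv_C_mul, pderiv_mul, pderiv_pow, pderiv_X] at h0
      simp only [map_add, map_mul, map_pow, eval_C, eval_X, map_ofNat, eval_add, eval_mul,
        eval_pow, Matrix.cons_val_zero, Matrix.cons_val_one, Matrix.head_cons,
        Matrix.cons_val_two, Matrix.tail_cons, Matrix.cons_val_three, map_one] at h0
      simp [Pi.single_apply] at h0
      simp only [map_add, map_mul, map_pow, eval_C, eval_X, eval_add, eval_mul, eval_pow,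
        Matrix.cons_val_zero, Matrix.cons_val_one, Matrix.head_cons, Matrix.cons_val_two,
        Matrix.tail_cons, Matrix.cons_val_three] at h
      ring_nf at h h0
      constructor
      · linear_combination h
      · linear_combination h0 - 4 * h
    · rintro ⟨rfl, rfl⟩
      refine ⟨?_, fun i => ?_⟩
      · simp only [map_add, map_mul, map_pow, eval_C, eval_X, eval_add, eval_mul, eval_pow,
          Matrix.cons_val_zero, Matrix.cons_val_one, Matrix.head_cons, Matrix.cons_val_two,
          Matrix.tail_cons, Matrix.cons_val_three]
        ring
      · simp only [map_add, pderiv_C_mul, pderiv_mul, pderiv_pow, pderiv_X]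
        simp only [map_add, map_mul, map_pow, eval_C, eval_X, map_ofNat, eval_add, eval_mul,
          eval_pow, Matrix.cons_val_zero, Matrix.cons_val_one, Matrix.head_cons,
          Matrix.cons_val_two, Matrix.tail_cons, Matrix.cons_val_three, map_one]
        fin_cases i <;> simp [Pi.single_apply]
end

section
/- Let K be an algebraically closed field of characteristic 2 and c ∈ K, c ≠ 0. The quartic surface X_c = {cσ₁σ₃ + σ₄ = 0} ⊂ ℙ³(K) has exactly 10 singular points, namely the 𝔖₄-orbits of (0,0,1,1) (6 points) and (0,0,0,1) (4 points), and each singular point is a node (ordinary double point with nondegenerate quadratic tangent cone). -/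
open MvPolynomial

/-- The quadratic part of the Taylor expansion of `F` at the point `v` (translate and take
the degree-2 homogeneous component). -/
noncomputable def quadPart {K : Type*} [Field K] (F : MvPolynomial (Fin 4) K)
    (v : Fin 4 → K) : MvPolynomial (Fin 4) K :=
  homogeneousComponent 2 (aeval (fun i => X i + C (v i)) F)

/-- A node (ordinary double point with nondegenerate quadratic tangent cone) in
characteristic 2: the quadratic part is `ℓ₁ℓ₂ + ℓ₃²` for linearly independent linear
forms. -/
def IsNodeAt {K : Type*} [Field K] (F : MvPolynomial (Fin 4) K) (v : Fin 4 → K) : Prop :=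
  ∃ ℓ₁ ℓ₂ ℓ₃ : MvPolynomial (Fin 4) K,
    ℓ₁.IsHomogeneous 1 ∧ ℓ₂.IsHomogeneous 1 ∧ ℓ₃.IsHomogeneous 1 ∧
    LinearIndependent K ![ℓ₁, ℓ₂, ℓ₃] ∧
    quadPart F v = ℓ₁ * ℓ₂ + ℓ₃ ^ 2

/-!
In characteristic 2 the partial derivatives of `F = cσ₁σ₃ + σ₄` sum to `σ₃`, so at a singular
point `σ₃ = σ₄ = 0` and at least two coordinates vanish. By the `𝔖₄`-symmetry of `F` these may
be taken to be `x₀, x₁`; at `(0,0,a,b)` one has `∂₀F = c·ab(a + b)`, which forces `a = b` or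
`ab = 0`. The Taylor expansion of `F` at `(0,0,t,t)` is
`t (t + x₂ + x₃) (x₀x₁ + cσ₁(x₀ + x₁)) + F`, and at `(0,0,0,t)` it is
`ct²(x₀x₁ + x₀x₂ + x₁x₂) + (cubic) + F`; both quadrics have rank 3. The singular points are
counted by their supports: six of size two and four of size one.
-/

section Singular

variable {σ R : Type*} [CommRing R]

theorem isHomogeneous_esymm [Fintype σ] (n : ℕ) : (esymm σ R n).IsHomogeneous n :=
  IsHomogeneous.sum _ _ _ fun t ht => by
    simpa [(Finset.mem_powersetCard.mp ht).2] using
      IsHomogeneous.prod t (fun i => X i) (fun _ => 1) fun i _ => isHomogeneous_X R i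

def IsSingularAt (F : MvPolynomial σ R) (v : σ → R) : Prop :=
  eval v F = 0 ∧ ∀ i, eval v (pderiv i F) = 0

theorem IsSingularAt.comp_perm {F : MvPolynomial σ R} (hF : F.IsSymmetric) {v : σ → R}
    (h : IsSingularAt F v) (g : Equiv.Perm σ) : IsSingularAt F (v ∘ g) := by
  refine ⟨by rw [← eval_rename, hF g]; exact h.1, fun i => ?_⟩
  rw [← eval_rename, ← pderiv_rename g.injective, hF g]
  exact h.2 (g i)

end Singular

theorem linearIndependent_of_det_eval_ne_zero {σ ι K : Type*} [Field K] [Fintype ι]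
    [DecidableEq ι] (ℓ : ι → MvPolynomial σ K) (w : ι → σ → K)
    (h : (Matrix.of fun i j => eval (w j) (ℓ i)).det ≠ 0) : LinearIndependent K ℓ :=
  LinearIndependent.of_comp (LinearMap.pi fun j => (aeval (w j)).toLinearMap)
    (Matrix.linearIndependent_rows_of_det_ne_zero h)

theorem ncard_setOf_rep_eq_smul_indicator {K ι : Type*} [Field K] [Fintype ι]
    (T : Finset (Finset ι)) (hT : ∅ ∉ T) :
    {p : Projectivization K (ι → K) |
      ∃ Z ∈ T, ∃ t : K, t ≠ 0 ∧ p.rep = t • (Z : Set ι).indicator 1}.ncard = T.card := by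
  classical
  set S := {p : Projectivization K (ι → K) |
      ∃ Z ∈ T, ∃ t : K, t ≠ 0 ∧ p.rep = t • (Z : Set ι).indicator 1}
  have hsupp (Z : Finset ι) {t : K} (ht : t ≠ 0) :
      ({i | (t • (Z : Set ι).indicator (1 : ι → K)) i ≠ 0} : Finset ι) = Z := by
    ext i; by_cases hi : i ∈ Z <;> simp [hi, ht]
  let supp (p : Projectivization K (ι → K)) : Finset ι := {i | p.rep i ≠ 0}
  have hinj : Set.InjOn supp S := by
    rintro p ⟨Z, -, t, ht, hp⟩ q ⟨Z', -, s, hs, hq⟩ hpq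
    obtain rfl : Z = Z' := by simpa only [supp, hp, hq, hsupp _ ht, hsupp _ hs] using hpq
    rw [← p.mk_rep, ← q.mk_rep, Projectivization.mk_eq_mk_iff']
    exact ⟨t / s, by rw [hp, hq, smul_smul, div_mul_cancel₀ _ hs]⟩
  have himage : supp '' S = T := by
    ext Z
    constructor
    · rintro ⟨p, ⟨Z', hZ', t, ht, hp⟩, rfl⟩
      simpa only [supp, hp, hsupp _ ht, Finset.mem_coe] using hZ'
    · intro hZ
      obtain ⟨i, hi⟩ := Finset.nonempty_iff_ne_empty.mpr (ne_of_mem_of_not_mem hZ hT)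
      have hne : (Z : Set ι).indicator (1 : ι → K) ≠ 0 :=
        Function.ne_iff.mpr ⟨i, by simp [hi]⟩
      obtain ⟨a, ha⟩ := Projectivization.exists_smul_eq_mk_rep K _ hne
      rw [Units.smul_def] at ha
      exact ⟨_, ⟨Z, hZ, a, a.ne_zero, ha.symm⟩, by simp only [supp, ← ha, hsupp _ a.ne_zero]⟩
  rw [← hinj.ncard_image, himage, Set.ncard_coe_finset]

theorem indicator_comp_perm {ι K : Type*} [Zero K] [One K] (Z : Finset ι) (g : Equiv.Perm ι) :
    (Z : Set ι).indicator (1 : ι → K) ∘ g = (↑(Z.map g.symm.toEmbedding) : Set ι).indicator 1 := by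
  classical
  ext i
  simp [Set.indicator_apply]

section Node

variable {K : Type*} [Field K]

theorem quadPart_eq_of_aeval_eq {F Q P₃ P₄ : MvPolynomial (Fin 4) K} {v : Fin 4 → K}
    (h : aeval (fun i => X i + C (v i)) F = Q + P₃ + P₄)
    (hQ : Q.IsHomogeneous 2) (h₃ : P₃.IsHomogeneous 3) (h₄ : P₄.IsHomogeneous 4) :
    quadPart F v = Q := by
  rw [quadPart, h, map_add, map_add, homogeneousComponent_eq_self hQ,
    homogeneousComponent_of_mem h₃, homogeneousComponent_of_mem h₄]
  simp

theorem aeval_translate_comp_perm {F : MvPolynomial (Fin 4) K} (hF : F.IsSymmetric)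
    (v : Fin 4 → K) (g : Equiv.Perm (Fin 4)) :
    aeval (fun i => X i + C ((v ∘ g) i)) F =
      rename g.symm (aeval (fun i => X i + C (v i)) F) := by
  conv_lhs => rw [← hF g.symm]
  rw [aeval_rename, ← AlgHom.comp_apply, comp_aeval]
  congr 2
  funext i
  simp

theorem IsNodeAt.comp_perm {F : MvPolynomial (Fin 4) K} (hF : F.IsSymmetric) {v : Fin 4 → K}
    (h : IsNodeAt F v) (g : Equiv.Perm (Fin 4)) : IsNodeAt F (v ∘ g) := by
  obtain ⟨ℓ₁, ℓ₂, ℓ₃, h₁, h₂, h₃, hli, hq⟩ := h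
  refine ⟨rename g.symm ℓ₁, rename g.symm ℓ₂, rename g.symm ℓ₃, h₁.rename_isHomogeneous,
    h₂.rename_isHomogeneous, h₃.rename_isHomogeneous, ?_, ?_⟩
  · have := hli.map' (renameEquiv K g.symm).toLinearEquiv.toLinearMap (LinearEquiv.ker _)
    rw [← FinVec.map_eq] at this
    exact this
  · unfold quadPart at hq ⊢
    rw [aeval_translate_comp_perm hF, ← rename_homogeneousComponent, hq, map_add, map_mul,
      map_pow]

end Node

section Quartic

variable {K : Type*} [Field K]

noncomputable def quartic (c : K) : MvPolynomial (Fin 4) K :=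
  C c * esymm (Fin 4) K 1 * esymm (Fin 4) K 3 + esymm (Fin 4) K 4

theorem isSymmetric_quartic (c : K) : (quartic c).IsSymmetric :=
  (((IsSymmetric.C c).mul (esymm_isSymmetric _ _ 1)).mul (esymm_isSymmetric _ _ 3)).add
    (esymm_isSymmetric _ _ 4)

theorem isHomogeneous_quartic (c : K) : (quartic c).IsHomogeneous 4 :=
  (((isHomogeneous_esymm 1).C_mul c).mul (isHomogeneous_esymm 3)).add (isHomogeneous_esymm 4)

theorem esymm_one_fin_four : esymm (Fin 4) K 1 = X 0 + X 1 + X 2 + X 3 := by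
  rw [esymm_one, Fin.sum_univ_four]

theorem esymm_three_fin_four :
    esymm (Fin 4) K 3 = X 0 * X 1 * X 2 + X 0 * X 1 * X 3 + X 0 * X 2 * X 3 + X 1 * X 2 * X 3 := by
  rw [esymm, show Finset.powersetCard 3 (Finset.univ : Finset (Fin 4)) =
    {{0, 1, 2}, {0, 1, 3}, {0, 2, 3}, {1, 2, 3}} by decide]
  simp +decide [Finset.sum_insert, mul_assoc, add_assoc]

theorem esymm_four_fin_four : esymm (Fin 4) K 4 = X 0 * X 1 * X 2 * X 3 := by
  rw [esymm, show Finset.powersetCard 4 (Finset.univ : Finset (Fin 4)) = {{0, 1, 2, 3}} by decide]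
  simp [mul_assoc]

theorem sum_pderiv_quartic [CharP K 2] (c : K) :
    ∑ i, pderiv i (quartic c) = esymm (Fin 4) K 3 := by
  have h2 : (2 : MvPolynomial (Fin 4) K) = 0 := CharTwo.two_eq_zero
  simp only [quartic, Fin.sum_univ_four, esymm_one_fin_four, esymm_three_fin_four,
    esymm_four_fin_four, map_add, Derivation.leibniz, pderiv_X, pderiv_C, Pi.single_apply,
    smul_eq_mul, Fin.reduceEq, if_true, if_false]
  -- over `ℤ`, `∑ ∂ᵢ(cσ₁σ₃ + σ₄) = 4cσ₃ + 2cσ₁σ₂ + σ₃`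
  linear_combination C c * (2 * (X 0 * X 1 * X 2 + X 0 * X 1 * X 3 + X 0 * X 2 * X 3
    + X 1 * X 2 * X 3) + (X 0 + X 1 + X 2 + X 3) * (X 0 * X 1 + X 0 * X 2 + X 0 * X 3
    + X 1 * X 2 + X 1 * X 3 + X 2 * X 3)) * h2

theorem eval_esymm_eq_zero_of_isSingularAt_quartic [CharP K 2] {c : K} {v : Fin 4 → K}
    (h : IsSingularAt (quartic c) v) :
    eval v (esymm (Fin 4) K 3) = 0 ∧ eval v (esymm (Fin 4) K 4) = 0 := by
  have h3 : eval v (esymm (Fin 4) K 3) = 0 := by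
    rw [← sum_pderiv_quartic c, map_sum]
    exact Finset.sum_eq_zero fun i _ => h.2 i
  refine ⟨h3, ?_⟩
  simpa [quartic, h3] using h.1

theorem exists_ne_apply_eq_zero_of_eval_esymm {v : Fin 4 → K} (h3 : eval v (esymm (Fin 4) K 3) = 0)
    (h4 : eval v (esymm (Fin 4) K 4) = 0) : ∃ i j, i ≠ j ∧ v i = 0 ∧ v j = 0 := by
  simp only [esymm_three_fin_four, esymm_four_fin_four, map_add, map_mul, eval_X] at h3 h4
  have hzero : v 0 = 0 ∨ v 1 = 0 ∨ v 2 = 0 ∨ v 3 = 0 := by simpa [or_assoc] using h4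
  rcases hzero with h | h | h | h <;>
    simp only [h, zero_mul, mul_zero, zero_add, add_zero, mul_eq_zero, or_assoc] at h3 <;>
    rcases h3 with h' | h' | h' <;> exact ⟨_, _, by decide, h, h'⟩

theorem eval_pderiv_zero_quartic (c a b : K) :
    eval ![0, 0, a, b] (pderiv 0 (quartic c)) = c * ((a + b) * (a * b)) := by
  simp only [quartic, esymm_one_fin_four, esymm_three_fin_four, esymm_four_fin_four, map_add,
    map_mul, Derivation.leibniz, pderiv_X, pderiv_C, Pi.single_apply, smul_eq_mul, Fin.reduceEq,
    if_true, if_false, eval_X, eval_C, map_zero, map_one, Matrix.cons_val, Matrix.cons_val_zero,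
    Matrix.cons_val_one]
  ring

def IsVertexOrEdgeMidpoint (v : Fin 4 → K) : Prop :=
  ∃ (g : Equiv.Perm (Fin 4)) (t : K), t ≠ 0 ∧
    (v = t • ((![0, 0, 1, 1] : Fin 4 → K) ∘ g) ∨ v = t • ((![0, 0, 0, 1] : Fin 4 → K) ∘ g))

theorem IsVertexOrEdgeMidpoint.comp_perm {v : Fin 4 → K} (h : IsVertexOrEdgeMidpoint v)
    (g : Equiv.Perm (Fin 4)) : IsVertexOrEdgeMidpoint (v ∘ g) := by
  obtain ⟨g', t, ht, rfl | rfl⟩ := h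
  exacts [⟨g' * g, t, ht, Or.inl rfl⟩, ⟨g' * g, t, ht, Or.inr rfl⟩]

theorem isVertexOrEdgeMidpoint_of_isSingularAt_zero_zero [CharP K 2] {c a b : K} (hc : c ≠ 0)
    (hv : ![0, 0, a, b] ≠ 0) (h : IsSingularAt (quartic c) ![0, 0, a, b]) :
    IsVertexOrEdgeMidpoint ![0, 0, a, b] := by
  have hderiv : (a + b) * (a * b) = 0 := by
    simpa [eval_pderiv_zero_quartic, hc] using h.2 0
  by_cases ha : a = 0
  · subst ha
    have hb : b ≠ 0 := by rintro rfl; exact hv (by ext i; fin_cases i <;> rfl)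
    exact ⟨1, b, hb, Or.inr (by ext i; fin_cases i <;> simp)⟩
  by_cases hb : b = 0
  · subst hb
    refine ⟨Equiv.swap 2 3, a, ha, Or.inr ?_⟩
    ext i; fin_cases i <;> simp [Equiv.swap_apply_of_ne_of_ne]
  obtain rfl : b = a := by
    have := eq_neg_of_add_eq_zero_left ((mul_eq_zero.mp hderiv).resolve_right (mul_ne_zero ha hb))
    rwa [CharTwo.neg_eq, eq_comm] at this
  exact ⟨1, b, hb, Or.inl (by ext i; fin_cases i <;> simp)⟩

theorem exists_perm_apply_zero_apply_one {i j : Fin 4} (hij : i ≠ j) :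
    ∃ g : Equiv.Perm (Fin 4), g 0 = i ∧ g 1 = j := by
  revert i j; decide

theorem isVertexOrEdgeMidpoint_of_isSingularAt [CharP K 2] {c : K} (hc : c ≠ 0) {v : Fin 4 → K}
    (hv : v ≠ 0) (h : IsSingularAt (quartic c) v) : IsVertexOrEdgeMidpoint v := by
  obtain ⟨h3, h4⟩ := eval_esymm_eq_zero_of_isSingularAt_quartic h
  obtain ⟨i, j, hij, hi, hj⟩ := exists_ne_apply_eq_zero_of_eval_esymm h3 h4
  obtain ⟨g, rfl, rfl⟩ := exists_perm_apply_zero_apply_one hij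
  have hw : v ∘ g = ![0, 0, v (g 2), v (g 3)] := by ext k; fin_cases k <;> simp [hi, hj]
  have hvg : IsVertexOrEdgeMidpoint (v ∘ g) := by
    have hne : v ∘ g ≠ 0 := by
      obtain ⟨k, hk⟩ := Function.ne_iff.mp hv
      exact Function.ne_iff.mpr ⟨g.symm k, by simpa using hk⟩
    have hsing := h.comp_perm (isSymmetric_quartic c) g
    rw [hw] at hne hsing ⊢
    exact isVertexOrEdgeMidpoint_of_isSingularAt_zero_zero hc hne hsing
  simpa [Function.comp_assoc] using hvg.comp_perm g.symm

theorem isSingularAt_quartic_edge [CharP K 2] (c t : K) :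
    IsSingularAt (quartic c) (t • ![0, 0, 1, 1]) := by
  simp only [IsSingularAt, quartic, esymm_one_fin_four, esymm_three_fin_four, esymm_four_fin_four]
  refine ⟨by simp, fun i => ?_⟩
  fin_cases i <;> simp [CharTwo.add_self_eq_zero]

theorem isSingularAt_quartic_vertex (c t : K) :
    IsSingularAt (quartic c) (t • ![0, 0, 0, 1]) := by
  simp only [IsSingularAt, quartic, esymm_one_fin_four, esymm_three_fin_four, esymm_four_fin_four]
  refine ⟨by simp, fun i => ?_⟩
  fin_cases i <;> simp

theorem isSingularAt_quartic_iff [CharP K 2] {c : K} (hc : c ≠ 0) {v : Fin 4 → K} (hv : v ≠ 0) :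
    IsSingularAt (quartic c) v ↔ IsVertexOrEdgeMidpoint v := by
  refine ⟨isVertexOrEdgeMidpoint_of_isSingularAt hc hv, ?_⟩
  rintro ⟨g, t, -, rfl | rfl⟩
  exacts [(isSingularAt_quartic_edge c t).comp_perm (isSymmetric_quartic c) g,
    (isSingularAt_quartic_vertex c t).comp_perm (isSymmetric_quartic c) g]

theorem aeval_translate_edge_quartic [CharP K 2] (c t : K) :
    aeval (fun i => X i + C ((t • ![0, 0, 1, 1] : Fin 4 → K) i)) (quartic c) =
      C (t ^ 2) * (X 0 * X 1 + C c * esymm (Fin 4) K 1 * (X 0 + X 1))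
        + C t * (X 2 + X 3) * (X 0 * X 1 + C c * esymm (Fin 4) K 1 * (X 0 + X 1)) + quartic c := by
  have h2 : (2 : MvPolynomial (Fin 4) K) = 0 := CharTwo.two_eq_zero
  simp only [quartic, esymm_one_fin_four, esymm_three_fin_four, esymm_four_fin_four, map_add,
    map_mul, aeval_X, aeval_C, algebraMap_eq, Pi.smul_apply, smul_eq_mul, Matrix.cons_val, C_pow,
    mul_zero, mul_one, map_one, C_0, add_zero]
  -- over `ℤ` the two sides differ by `2ct(σ₁x₀x₁ + σ₃(y))`, where `y = x + t(e₂ + e₃)`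
  linear_combination C c * C t * ((X 0 + X 1 + X 2 + X 3) * X 0 * X 1 + X 0 * X 1 * (X 2 + C t)
    + X 0 * X 1 * (X 3 + C t) + X 0 * (X 2 + C t) * (X 3 + C t)
    + X 1 * (X 2 + C t) * (X 3 + C t)) * h2

theorem aeval_translate_vertex_quartic (c t : K) :
    aeval (fun i => X i + C ((t • ![0, 0, 0, 1] : Fin 4 → K) i)) (quartic c) =
      C (c * t ^ 2) * (X 0 * X 1 + X 0 * X 2 + X 1 * X 2)
        + C t * (C c * esymm (Fin 4) K 3
          + C c * esymm (Fin 4) K 1 * (X 0 * X 1 + X 0 * X 2 + X 1 * X 2) + X 0 * X 1 * X 2)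
        + quartic c := by
  simp only [quartic, esymm_one_fin_four, esymm_three_fin_four, esymm_four_fin_four, map_add,
    map_mul, aeval_X, aeval_C, algebraMap_eq, Pi.smul_apply, smul_eq_mul, Matrix.cons_val, C_pow,
    mul_zero, mul_one, map_one, C_0, add_zero]
  ring

theorem isNodeAt_quartic_edge [CharP K 2] {c t : K} (hc : c ≠ 0) (ht : t ≠ 0) :
    IsNodeAt (quartic c) (t • ![0, 0, 1, 1]) := by
  have h2 : (2 : MvPolynomial (Fin 4) K) = 0 := CharTwo.two_eq_zero
  have hσ : (esymm (Fin 4) K 1).IsHomogeneous 1 := isHomogeneous_esymm 1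
  have hX := isHomogeneous_X K (σ := Fin 4)
  have hq : (X 0 * X 1 + C c * esymm (Fin 4) K 1 * (X 0 + X 1)).IsHomogeneous 2 :=
    ((hX 0).mul (hX 1)).add ((hσ.C_mul c).mul ((hX 0).add (hX 1)))
  refine ⟨C t * (X 0 + C c * esymm (Fin 4) K 1), C t * (X 1 + C c * esymm (Fin 4) K 1),
    C t * (C c * esymm (Fin 4) K 1), ((hX 0).add (hσ.C_mul c)).C_mul t,
    ((hX 1).add (hσ.C_mul c)).C_mul t, (hσ.C_mul c).C_mul t, ?_, ?_⟩
  · apply linearIndependent_of_det_eval_ne_zero _ ![Pi.single 0 1, Pi.single 1 1, Pi.single 3 1]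
    rw [Matrix.det_fin_three]
    convert mul_ne_zero (pow_ne_zero 3 ht) hc using 1
    simp only [esymm_one_fin_four, Matrix.of_apply, Matrix.cons_val, Matrix.cons_val_zero,
      Matrix.cons_val_one, map_mul, map_add, eval_C, eval_X, Pi.single_apply, Fin.reduceEq,
      if_true, if_false]
    ring
  · rw [quadPart_eq_of_aeval_eq (aeval_translate_edge_quartic c t) (hq.C_mul _)
      ((((hX 2).add (hX 3)).C_mul t).mul hq) (isHomogeneous_quartic c), map_pow]
    linear_combination (-(C t ^ 2 * C c ^ 2 * esymm (Fin 4) K 1 ^ 2)) * h2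

theorem isNodeAt_quartic_vertex {c t r : K} (hc : c ≠ 0) (ht : t ≠ 0) (hr : r ^ 2 = -c) :
    IsNodeAt (quartic c) (t • ![0, 0, 0, 1]) := by
  have hX := isHomogeneous_X K (σ := Fin 4)
  have he : (X 0 * X 1 + X 0 * X 2 + X 1 * X 2 : MvPolynomial (Fin 4) K).IsHomogeneous 2 :=
    (((hX 0).mul (hX 1)).add ((hX 0).mul (hX 2))).add ((hX 1).mul (hX 2))
  refine ⟨C (c * t ^ 2) * (X 0 + X 2), X 1 + X 2, C (r * t) * X 2,
    ((hX 0).add (hX 2)).C_mul _, (hX 1).add (hX 2), (hX 2).C_mul _, ?_, ?_⟩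
  · apply linearIndependent_of_det_eval_ne_zero _ ![Pi.single 0 1, Pi.single 1 1, Pi.single 2 1]
    rw [Matrix.det_fin_three]
    have hr0 : r ≠ 0 := by rintro rfl; exact hc (by simpa using hr.symm)
    simp [hc, ht, hr0]
  · have hr' : (C r : MvPolynomial (Fin 4) K) ^ 2 = -C c := by rw [← map_pow, hr, map_neg]
    rw [quadPart_eq_of_aeval_eq (aeval_translate_vertex_quartic c t) (he.C_mul _)
      (((((isHomogeneous_esymm 3).C_mul c).add (((isHomogeneous_esymm 1).C_mul c).mul he)).add
        (((hX 0).mul (hX 1)).mul (hX 2))).C_mul t) (isHomogeneous_quartic c)]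
    simp only [map_mul, map_pow]
    linear_combination (-(C t ^ 2 * X 2 ^ 2)) * hr'

theorem IsVertexOrEdgeMidpoint.isNodeAt_quartic [CharP K 2] {c r : K} (hc : c ≠ 0)
    (hr : r ^ 2 = -c) {v : Fin 4 → K} (h : IsVertexOrEdgeMidpoint v) : IsNodeAt (quartic c) v := by
  obtain ⟨g, t, ht, rfl | rfl⟩ := h
  exacts [(isNodeAt_quartic_edge hc ht).comp_perm (isSymmetric_quartic c) g,
    (isNodeAt_quartic_vertex hc ht hr).comp_perm (isSymmetric_quartic c) g]

theorem exists_perm_eq_map_of_card {Z : Finset (Fin 4)} (h : Z.card = 2 ∨ Z.card = 1) :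
    ∃ g : Equiv.Perm (Fin 4), Z = ({2, 3} : Finset (Fin 4)).map g.symm.toEmbedding ∨
      Z = ({3} : Finset (Fin 4)).map g.symm.toEmbedding := by
  revert Z; decide

theorem isVertexOrEdgeMidpoint_iff {v : Fin 4 → K} :
    IsVertexOrEdgeMidpoint v ↔ ∃ Z ∈ ({Z | Z.card = 2 ∨ Z.card = 1} : Finset (Finset (Fin 4))),
      ∃ t : K, t ≠ 0 ∧ v = t • (Z : Set (Fin 4)).indicator 1 := by
  have hedge : (![0, 0, 1, 1] : Fin 4 → K) =
      (↑({2, 3} : Finset (Fin 4)) : Set (Fin 4)).indicator 1 := by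
    ext i; fin_cases i <;> simp
  have hvertex : (![0, 0, 0, 1] : Fin 4 → K) =
      (↑({3} : Finset (Fin 4)) : Set (Fin 4)).indicator 1 := by
    ext i; fin_cases i <;> simp
  simp only [IsVertexOrEdgeMidpoint, hedge, hvertex, indicator_comp_perm]
  constructor
  · rintro ⟨g, t, ht, h | h⟩
    exacts [⟨_, by simp, t, ht, h⟩, ⟨_, by simp, t, ht, h⟩]
  · rintro ⟨Z, hZ, t, ht, rfl⟩
    obtain ⟨g, rfl | rfl⟩ := exists_perm_eq_map_of_card (by simpa using hZ)
    exacts [⟨g, t, ht, Or.inl rfl⟩, ⟨g, t, ht, Or.inr rfl⟩]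

end Quartic

/-- for `c ≠ 0` in an algebraically closed field of characteristic 2, the
quartic `X_c = {cσ₁σ₃ + σ₄ = 0} ⊂ ℙ³` has exactly 10 singular points, namely the
`𝔖₄`-orbits of `(0,0,1,1)` (6 points) and `(0,0,0,1)` (4 points), and each singular point is
a node. -/
theorem stmt_16 (K : Type*) [Field K] [IsAlgClosed K] [CharP K 2]
    (c : K) (hc : c ≠ 0) (F : MvPolynomial (Fin 4) K)
    (hF : F = C c * esymm (Fin 4) K 1 * esymm (Fin 4) K 3 + esymm (Fin 4) K 4) :
    {p : Projectivization K (Fin 4 → K) |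
        eval p.rep F = 0 ∧ ∀ i, eval p.rep (pderiv i F) = 0} =
      {p : Projectivization K (Fin 4 → K) |
        ∃ (g : Equiv.Perm (Fin 4)) (t : K), t ≠ 0 ∧
          (p.rep = t • ((![0, 0, 1, 1] : Fin 4 → K) ∘ g) ∨
           p.rep = t • ((![0, 0, 0, 1] : Fin 4 → K) ∘ g))} ∧
    {p : Projectivization K (Fin 4 → K) |
        eval p.rep F = 0 ∧ ∀ i, eval p.rep (pderiv i F) = 0}.ncard = 10 ∧
    ∀ p : Projectivization K (Fin 4 → K),
      (eval p.rep F = 0 ∧ ∀ i, eval p.rep (pderiv i F) = 0) → IsNodeAt F p.rep := by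
  obtain rfl : F = quartic c := hF
  obtain ⟨r, hr⟩ := IsAlgClosed.exists_pow_nat_eq (-c) two_pos
  have hsing (p : Projectivization K (Fin 4 → K)) :
      IsSingularAt (quartic c) p.rep ↔ IsVertexOrEdgeMidpoint p.rep :=
    isSingularAt_quartic_iff hc p.rep_nonzero
  refine ⟨Set.ext hsing, ?_, fun p hp => ((hsing p).1 hp).isNodeAt_quartic hc hr⟩
  calc _ = {p : Projectivization K (Fin 4 → K) | IsVertexOrEdgeMidpoint p.rep}.ncard :=
        congrArg Set.ncard (Set.ext hsing)
    _ = 10 := by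
      simp_rw [isVertexOrEdgeMidpoint_iff]
      rw [ncard_setOf_rep_eq_smul_indicator _ (by decide)]
      decide
end

section
/- Let K be an algebraically closed field of characteristic 2 and let X ⊂ ℙ³(K) be a normal quartic surface with a singular point at P = [0:0:0:1], with Taylor development F = z²Q(x) + zG(x) + B(x). If two distinct singular points of X other than P lie on the same line through P, then their common image x ∈ ℙ² satisfies Q(x) = G(x) = B(x) = 0, the gradients ∇Q(x), ∇G(x), ∇B(x) are pairwise proportional, and ∇Q(x) ≠ 0, ∇G(x) ≠ 0. -/
/-!
Restricted to the line through `P` and `(x, 0)`, the polynomial `F` and its `x`-derivatives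
become the quadratics `z²Q + zG + B` and `z²∂Q + z∂G + ∂B` in `z`, while `∂F/∂z = 2zQ + G = G`
in characteristic 2. Two distinct singular points on the line are two distinct roots of each of
these quadratics, so Vieta gives `G = -(z₁ + z₂) Q`, `B = z₁z₂ Q` and the same relations between
the gradients; with `G(x) = 0` and `z₁ + z₂ ≠ 0` (characteristic 2 again) this forces
`Q(x) = B(x) = 0`. If `∇Q(x)` vanished, every point of the line would be singular, contradicting
the finiteness of the singular locus.
-/

open MvPolynomial

namespace MvPolynomial

variable {σ R : Type*} [CommSemiring R]

theorem IsHomogeneous.eval_smul {φ : MvPolynomial σ R} {n : ℕ} (h : φ.IsHomogeneous n)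
    (c : R) (v : σ → R) : eval (c • v) φ = c ^ n * eval v φ := by
  rw [eval_eq, eval_eq, Finset.mul_sum]
  refine Finset.sum_congr rfl fun d hd => ?_
  simp only [Pi.smul_apply, smul_eq_mul, mul_pow, Finset.prod_mul_distrib,
    Finset.prod_pow_eq_pow_sum, ← h.degree_eq_sum_deg_support hd]
  ring

/-- Singularity of the affine cone over `{F = 0}`; for homogeneous `F` it only depends on the
line through `v`. -/
def IsSingularPoint (F : MvPolynomial σ R) (v : σ → R) : Prop :=
  eval v F = 0 ∧ ∀ i, eval v (pderiv i F) = 0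

theorem IsHomogeneous.isSingularPoint_smul {F : MvPolynomial σ R} {n : ℕ}
    (hF : F.IsHomogeneous n) {v : σ → R} (hv : IsSingularPoint F v) (c : R) :
    IsSingularPoint F (c • v) := by
  refine ⟨?_, fun i => ?_⟩
  · rw [hF.eval_smul, hv.1, mul_zero]
  · rw [(hF.pderiv (i := i)).eval_smul, hv.2 i, mul_zero]

end MvPolynomial

section Projective

variable {K : Type*} [Field K]

theorem MvPolynomial.IsHomogeneous.isSingularPoint_rep {σ : Type*}
    {F : MvPolynomial σ K} {n : ℕ} (hF : F.IsHomogeneous n) {v : σ → K} (hv0 : v ≠ 0)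
    (hv : IsSingularPoint F v) : IsSingularPoint F (Projectivization.mk K v hv0).rep := by
  obtain ⟨a, ha⟩ := Projectivization.exists_smul_eq_mk_rep K v hv0
  rw [← ha]
  exact hF.isSingularPoint_smul hv a

theorem Fin.snoc_ne_zero {n : ℕ} {x : Fin n → K} (hx : x ≠ 0) (z : K) :
    (Fin.snoc x z : Fin (n + 1) → K) ≠ 0 := fun h =>
  hx <| funext fun i => by simpa using congrFun h i.castSucc

theorem Projectivization.mk_snoc_injective {n : ℕ} {x : Fin n → K} (hx : x ≠ 0) :
    Function.Injective fun z : K => Projectivization.mk K _ (Fin.snoc_ne_zero hx z) := by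
  intro z z' h
  obtain ⟨a, ha⟩ := (Projectivization.mk_eq_mk_iff' K _ _ _ _).mp h
  obtain ⟨i, hi⟩ := Function.ne_iff.mp hx
  have ha1 : a = 1 :=
    mul_right_cancel₀ hi (by simpa using congrFun ha i.castSucc)
  simpa [ha1] using (congrFun ha (Fin.last n)).symm

theorem MvPolynomial.IsHomogeneous.infinite_setOf_isSingularPoint [Infinite K] {n d : ℕ}
    {F : MvPolynomial (Fin (n + 1)) K} (hF : F.IsHomogeneous d) {x : Fin n → K} (hx : x ≠ 0)
    (h : ∀ z, IsSingularPoint F (Fin.snoc x z)) :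
    {p : Projectivization K (Fin (n + 1) → K) | IsSingularPoint F p.rep}.Infinite :=
  Set.infinite_of_injective_forall_mem (Projectivization.mk_snoc_injective hx)
    fun z => hF.isSingularPoint_rep _ (h z)

end Projective

namespace MvPolynomial

variable {R : Type*} [CommRing R] {n : ℕ}

/-- The Taylor development `z²Q(x) + zG(x) + B(x)` at the point `[0 : ⋯ : 0 : 1]`, where `z` is
the last variable. -/
noncomputable def quadraticInLast (Q G B : MvPolynomial (Fin n) R) :
    MvPolynomial (Fin (n + 1)) R :=
  X (Fin.last n) ^ 2 * rename Fin.castSucc Q + X (Fin.last n) * rename Fin.castSucc G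
    + rename Fin.castSucc B

theorem eval_snoc_rename_castSucc (x : Fin n → R) (z : R) (p : MvPolynomial (Fin n) R) :
    eval (Fin.snoc x z) (rename Fin.castSucc p) = eval x p := by
  rw [eval_rename, Fin.snoc_comp_castSucc]

theorem pderiv_last_rename_castSucc (p : MvPolynomial (Fin n) R) :
    pderiv (Fin.last n) (rename Fin.castSucc p) = 0 := by
  refine pderiv_eq_zero_of_notMem_vars fun h => ?_
  obtain ⟨j, -, hj⟩ := Finset.mem_image.mp (vars_rename _ p h)
  exact (Fin.castSucc_lt_last j).ne hj

variable (Q G B : MvPolynomial (Fin n) R)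

theorem eval_snoc_quadraticInLast (x : Fin n → R) (z : R) :
    eval (Fin.snoc x z) (quadraticInLast Q G B) = z ^ 2 * eval x Q + z * eval x G + eval x B := by
  simp only [quadraticInLast, map_add, map_mul, map_pow, eval_X, Fin.snoc_last,
    eval_snoc_rename_castSucc]

theorem pderiv_last_quadraticInLast [CharP R 2] :
    pderiv (Fin.last n) (quadraticInLast Q G B) = rename Fin.castSucc G := by
  simp only [quadraticInLast, map_add, pderiv_mul, pderiv_pow, pderiv_X_self,
    pderiv_last_rename_castSucc, CharP.cast_eq_zero]
  ring

theorem pderiv_castSucc_quadraticInLast (j : Fin n) :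
    pderiv j.castSucc (quadraticInLast Q G B)
      = quadraticInLast (pderiv j Q) (pderiv j G) (pderiv j B) := by
  simp only [quadraticInLast, map_add, pderiv_mul, pderiv_pow,
    pderiv_X_of_ne (Fin.castSucc_lt_last j).ne', pderiv_rename (Fin.castSucc_injective n)]
  ring

variable {Q G B}

theorem IsHomogeneous.quadraticInLast {d : ℕ} (hQ : Q.IsHomogeneous d)
    (hG : G.IsHomogeneous (d + 1)) (hB : B.IsHomogeneous (d + 2)) :
    (quadraticInLast Q G B).IsHomogeneous (d + 2) := by
  refine (IsHomogeneous.add ?_ ?_).add hB.rename_isHomogeneous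
  · convert (isHomogeneous_X_pow (Fin.last n) 2).mul hQ.rename_isHomogeneous using 1; ring
  · convert (isHomogeneous_X R (Fin.last n)).mul hG.rename_isHomogeneous using 1; ring

theorem isSingularPoint_quadraticInLast_snoc_iff [CharP R 2] (x : Fin n → R) (z : R) :
    IsSingularPoint (quadraticInLast Q G B) (Fin.snoc x z) ↔
      z ^ 2 * eval x Q + z * eval x G + eval x B = 0 ∧ eval x G = 0 ∧
        ∀ j, z ^ 2 * eval x (pderiv j Q) + z * eval x (pderiv j G) + eval x (pderiv j B) = 0 := by
  simp only [IsSingularPoint, Fin.forall_fin_succ', pderiv_castSucc_quadraticInLast,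
    pderiv_last_quadraticInLast, eval_snoc_quadraticInLast, eval_snoc_rename_castSucc]
  tauto

end MvPolynomial

theorem quadratic_coeffs_of_two_roots {K : Type*} [Field K] {a b c z₁ z₂ : K} (hz : z₁ ≠ z₂)
    (h₁ : z₁ ^ 2 * a + z₁ * b + c = 0) (h₂ : z₂ ^ 2 * a + z₂ * b + c = 0) :
    b = -(z₁ + z₂) * a ∧ c = z₁ * z₂ * a := by
  have hb : b = -(z₁ + z₂) * a := by
    refine mul_left_cancel₀ (sub_ne_zero.mpr hz) ?_
    linear_combination h₁ - h₂
  exact ⟨hb, by linear_combination h₁ - z₁ * hb⟩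

/-- let `X = {z²Q(x) + zG(x) + B(x) = 0} ⊂ ℙ³` be a normal quartic in
characteristic 2, singular at `P = [0:0:0:1]`. If two distinct singular points other than
`P` lie on the same line through `P` (i.e. have the same projection `x ∈ ℙ²`), then
`Q(x) = G(x) = B(x) = 0`, the gradients `∇Q(x), ∇G(x), ∇B(x)` are pairwise proportional,
and `∇Q(x) ≠ 0`, `∇G(x) ≠ 0`. -/
theorem stmt_19 (K : Type*) [Field K] [IsAlgClosed K] [CharP K 2]
    (Q G B : MvPolynomial (Fin 3) K)
    (hQ : Q.IsHomogeneous 2) (hG : G.IsHomogeneous 3) (hB : B.IsHomogeneous 4)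
    (F : MvPolynomial (Fin 4) K)
    (hF : F = X 3 ^ 2 * rename (Fin.castSucc : Fin 3 → Fin 4) Q
        + X 3 * rename (Fin.castSucc : Fin 3 → Fin 4) G
        + rename (Fin.castSucc : Fin 3 → Fin 4) B)
    (hfin : {p : Projectivization K (Fin 4 → K) |
        eval p.rep F = 0 ∧ ∀ i, eval p.rep (pderiv i F) = 0}.Finite)
    (x : Fin 3 → K) (hx : x ≠ 0) (z₁ z₂ : K) (hz : z₁ ≠ z₂)
    (h₁ : eval (Fin.snoc x z₁) F = 0 ∧ ∀ i, eval (Fin.snoc x z₁) (pderiv i F) = 0)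
    (h₂ : eval (Fin.snoc x z₂) F = 0 ∧ ∀ i, eval (Fin.snoc x z₂) (pderiv i F) = 0) :
    eval x Q = 0 ∧ eval x G = 0 ∧ eval x B = 0 ∧
    (fun i => eval x (pderiv i Q)) ≠ 0 ∧
    (fun i => eval x (pderiv i G)) ≠ 0 ∧
    ∃ c₁ c₂ : K, (∀ i, eval x (pderiv i G) = c₁ * eval x (pderiv i Q)) ∧
      (∀ i, eval x (pderiv i B) = c₂ * eval x (pderiv i Q)) := by
  obtain rfl : F = quadraticInLast Q G B := hF
  obtain ⟨e₁, hg, d₁⟩ := (isSingularPoint_quadraticInLast_snoc_iff x z₁).mp h₁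
  obtain ⟨e₂, -, d₂⟩ := (isSingularPoint_quadraticInLast_snoc_iff x z₂).mp h₂
  have hsum : -(z₁ + z₂) ≠ 0 := neg_ne_zero.mpr fun h => hz (CharTwo.add_eq_zero.mp h)
  obtain ⟨hGQ, hBQ⟩ := quadratic_coeffs_of_two_roots hz e₁ e₂
  have hq : eval x Q = 0 := (mul_eq_zero.mp (hGQ.symm.trans hg)).resolve_left hsum
  have hb : eval x B = 0 := by rw [hBQ, hq, mul_zero]
  have hgrad (j : Fin 3) := quadratic_coeffs_of_two_roots hz (d₁ j) (d₂ j)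
  have hQne : (fun i => eval x (pderiv i Q)) ≠ 0 := by
    intro hQ0
    refine (hQ.quadraticInLast hG hB).infinite_setOf_isSingularPoint hx (fun z => ?_) hfin
    have hQj (j : Fin 3) : eval x (pderiv j Q) = 0 := congrFun hQ0 j
    simp [isSingularPoint_quadraticInLast_snoc_iff, hq, hg, hb, hgrad, hQj]
  refine ⟨hq, hg, hb, hQne, fun hG0 => hQne (funext fun j => ?_), -(z₁ + z₂), z₁ * z₂,
    fun j => (hgrad j).1, fun j => (hgrad j).2⟩
  exact (mul_eq_zero.mp ((hgrad j).1.symm.trans (congrFun hG0 j))).resolve_left hsum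
end
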